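/- arXiv:2201.03610 — 2 statements merged into one kernel-verified Lean document; each statement's English description precedes it below -/
import Mathlib

section
/- Let d ≥ 3, let ψ : ℝ^d → ℂ^N be continuously differentiable, let ε > 0, and set φ := ψ/|ψ|_ε^{d/(d-1)}. Then at every point of ℝ^d: |γ·(-i∇)φ|² |ψ|_ε² = |γ·(-i∇)ψ|² / |ψ|_ε^{2/(d-1)} + (d/(d-2))² |∇(|ψ|_ε^{(d-2)/(d-1)})|² · |ψ|²/|ψ|_ε² − (2d/(d-1)) |ψ|_ε^{-2/(d-1)-1} · Re⟨ γ·(∇|ψ|_ε) ψ , γ·(-i∇)ψ·i ⟩, where γ·(∇|ψ|_ε)ψ := Σ_j (∂_j |ψ|_ε) γ_j ψ and the last term equals −(2d/(d-1)) |ψ|_ε^{-2/(d-1)-1} Re⟨ Σ_j (∂_j|ψ|_ε) γ_j ψ , Σ_k γ_k ∂_k ψ ⟩. -/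
open MeasureTheory Complex Filter ENNReal

noncomputable section

/-- `ℝ^d` with the Euclidean norm. -/
abbrev ESp (d : ℕ) := EuclideanSpace ℝ (Fin d)

/-- Spinor space `ℂ^N` with the Hermitian norm. -/
abbrev Spinor (N : ℕ) := EuclideanSpace ℂ (Fin N)

/-- Action of an `N × N` complex matrix on a spinor. -/
def mulVecE {N : ℕ} (M : Matrix (Fin N) (Fin N) ℂ) (v : Spinor N) : Spinor N :=
  Matrix.toEuclideanLin M v

/-- Partial derivative in the `j`-th coordinate direction. -/
def pd {d : ℕ} {V : Type*} [NormedAddCommGroup V] [NormedSpace ℝ V]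
    (j : Fin d) (f : ESp d → V) (x : ESp d) : V :=
  fderiv ℝ f x (EuclideanSpace.single j 1)

/-- The Dirac operator `γ·(-i∇)ψ = ∑ⱼ γⱼ (-i ∂ⱼ ψ)`. -/
def dirac {d N : ℕ} (γ : Fin d → Matrix (Fin N) (Fin N) ℂ)
    (ψ : ESp d → Spinor N) (x : ESp d) : Spinor N :=
  ∑ j, mulVecE (γ j) ((-Complex.I) • pd j ψ x)

/-- `|∇f|² = ∑ⱼ |∂ⱼ f|²` for a (scalar- or vector-valued) function `f`. -/
def gradSq {d : ℕ} {V : Type*} [NormedAddCommGroup V] [NormedSpace ℝ V]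
    (f : ESp d → V) (x : ESp d) : ℝ :=
  ∑ j, ‖pd j f x‖ ^ 2

/-- The regularized modulus `|ψ|_ε = √(|ψ|² + ε²)`. -/
def regMod {d N : ℕ} (ψ : ESp d → Spinor N) (ε : ℝ) (x : ESp d) : ℝ :=
  Real.sqrt (‖ψ x‖ ^ 2 + ε ^ 2)

/-! Write `r = |ψ|_ε`, `c = d/(d-1)`, `V = ∑ₖ γₖ ∂ₖψ` and `W = ∑ⱼ (∂ⱼr) γⱼψ`. By the product
rule `γ·(-i∇)φ = -i (r^{-c} V - c r^{-c-1} W)`, so `|γ·(-i∇)φ|²` expands into `r^{-2c}|V|²`,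
the cross term `-2c r^{-2c-1} Re⟨W, V⟩` and `c² r^{-2c-2} |W|²`. The Clifford relations give
`|W|² = |∇r|² |ψ|²`, and `|∇ r^{(d-2)/(d-1)}|² = ((d-2)/(d-1))² r^{-2/(d-1)} |∇r|²`; what remains
is matching powers of `r`. -/

open scoped InnerProductSpace

section Clifford

variable {ι : Type*} [DecidableEq ι] {N : ℕ}

lemma mulVecE_add (M : Matrix (Fin N) (Fin N) ℂ) (u v : Spinor N) :
    mulVecE M (u + v) = mulVecE M u + mulVecE M v :=
  map_add _ u v

lemma mulVecE_smul {R : Type*} [SMul R ℂ] [SMul R (Spinor N)] [IsScalarTower R ℂ (Spinor N)]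
    (M : Matrix (Fin N) (Fin N) ℂ) (c : R) (v : Spinor N) :
    mulVecE M (c • v) = c • mulVecE M v :=
  LinearMap.map_smul_of_tower _ c v

lemma re_inner_mulVecE_gamma {γ : ι → Matrix (Fin N) (Fin N) ℂ}
    (hherm : ∀ j, (γ j).IsHermitian)
    (hanti : ∀ j k, γ j * γ k + γ k * γ j = if j = k then (2 : ℂ) • 1 else 0)
    (j k : ι) (v : Spinor N) :
    re ⟪mulVecE (γ j) v, mulVecE (γ k) v⟫_ℂ = if j = k then ‖v‖ ^ 2 else 0 := by
  have hsym (A : Matrix (Fin N) (Fin N) ℂ) (hA : A.IsHermitian) (u w : Spinor N) :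
      ⟪mulVecE A u, w⟫_ℂ = ⟪u, mulVecE A w⟫_ℂ :=
    Matrix.isSymmetric_toEuclideanLin_iff.2 hA u w
  have hsum : 2 * re ⟪mulVecE (γ j) v, mulVecE (γ k) v⟫_ℂ
      = re ⟪v, mulVecE (γ j * γ k + γ k * γ j) v⟫_ℂ := by
    rw [two_mul]
    nth_rw 2 [← inner_conj_symm]
    rw [conj_re, hsym _ (hherm j), hsym _ (hherm k), ← add_re, ← inner_add_right]
    simp only [mulVecE, map_add, LinearMap.add_apply, Matrix.toLpLin_mul_same,
      LinearMap.comp_apply]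
  have hanti_v : re ⟪v, mulVecE (γ j * γ k + γ k * γ j) v⟫_ℂ
      = if j = k then 2 * ‖v‖ ^ 2 else 0 := by
    rw [hanti]
    split_ifs
    · have h2 : mulVecE ((2 : ℂ) • 1) v = ((2 : ℝ) : ℂ) • v := by simp [mulVecE]
      rw [h2, inner_smul_right, re_ofReal_mul, ← RCLike.re_to_complex, inner_self_eq_norm_sq]
    · simp [mulVecE]
  rw [hanti_v] at hsum
  split_ifs at hsum ⊢ <;> linarith

lemma norm_sq_sum_smul_mulVecE [Fintype ι] {γ : ι → Matrix (Fin N) (Fin N) ℂ}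
    (hherm : ∀ j, (γ j).IsHermitian)
    (hanti : ∀ j k, γ j * γ k + γ k * γ j = if j = k then (2 : ℂ) • 1 else 0)
    (a : ι → ℝ) (v : Spinor N) :
    ‖∑ j, a j • mulVecE (γ j) v‖ ^ 2 = (∑ j, a j ^ 2) * ‖v‖ ^ 2 := by
  conv_lhs => rw [← inner_self_eq_norm_sq (𝕜 := ℂ), RCLike.re_to_complex, sum_inner]
  simp_rw [inner_sum, ← Complex.coe_smul, inner_smul_left, inner_smul_right, re_sum]
  simp [re_inner_mulVecE_gamma hherm hanti, Finset.sum_mul, sq, mul_assoc]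

end Clifford

section PartialDerivatives

variable {d : ℕ} {V : Type*} [NormedAddCommGroup V] [NormedSpace ℝ V] {x : ESp d}

lemma pd_smul {s : ESp d → ℝ} {f : ESp d → V} (hs : DifferentiableAt ℝ s x)
    (hf : DifferentiableAt ℝ f x) (j : Fin d) :
    pd j (fun y => s y • f y) x = s x • pd j f x + pd j s x • f x := by
  simp [pd, fderiv_fun_smul hs hf]

lemma pd_rpow_const {f : ESp d → ℝ} (hf : DifferentiableAt ℝ f x) (hx : f x ≠ 0) (p : ℝ)
    (j : Fin d) : pd j (fun y => f y ^ p) x = p * f x ^ (p - 1) * pd j f x := by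
  simp [pd, (hf.hasFDerivAt.rpow_const (Or.inl hx)).fderiv]

lemma gradSq_eq_sum_sq (f : ESp d → ℝ) (x : ESp d) : gradSq f x = ∑ j, pd j f x ^ 2 := by
  simp [gradSq]

lemma gradSq_rpow_const {f : ESp d → ℝ} (hf : DifferentiableAt ℝ f x) (hx : f x ≠ 0) (p : ℝ) :
    gradSq (fun y => f y ^ p) x = (p * f x ^ (p - 1)) ^ 2 * gradSq f x := by
  simp only [gradSq_eq_sum_sq, pd_rpow_const hf hx, mul_pow, Finset.mul_sum]

end PartialDerivatives

section Spinors

variable {d N : ℕ} {ψ : ESp d → Spinor N} {ε : ℝ} {x : ESp d}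

lemma regMod_pos (hε : ε ≠ 0) : 0 < regMod ψ ε x :=
  Real.sqrt_pos.2 (by positivity)

lemma differentiableAt_regMod (hψ : DifferentiableAt ℝ ψ x) (hε : ε ≠ 0) :
    DifferentiableAt ℝ (regMod ψ ε) x :=
  ((hψ.norm_sq ℂ).add_const _).sqrt (by positivity)

lemma dirac_eq_neg_I_smul (γ : Fin d → Matrix (Fin N) (Fin N) ℂ) :
    dirac γ ψ x = (-I) • ∑ k, mulVecE (γ k) (pd k ψ x) := by
  simp only [dirac, mulVecE_smul, Finset.smul_sum]

lemma dirac_smul (γ : Fin d → Matrix (Fin N) (Fin N) ℂ) {s : ESp d → ℝ}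
    (hs : DifferentiableAt ℝ s x) (hψ : DifferentiableAt ℝ ψ x) :
    dirac γ (fun y => s y • ψ y) x
      = (-I) • (s x • ∑ k, mulVecE (γ k) (pd k ψ x) + ∑ k, pd k s x • mulVecE (γ k) (ψ x)) := by
  simp only [dirac_eq_neg_I_smul, pd_smul hs hψ, mulVecE_add, mulVecE_smul,
    Finset.sum_add_distrib, Finset.smul_sum]

end Spinors

lemma norm_smul_add_smul_sq {E : Type*} [NormedAddCommGroup E] [InnerProductSpace ℂ E]
    (a b : ℝ) (v w : E) :
    ‖a • v + b • w‖ ^ 2 = a ^ 2 * ‖v‖ ^ 2 + 2 * a * b * re ⟪v, w⟫_ℂ + b ^ 2 * ‖w‖ ^ 2 := by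
  rw [norm_add_sq (𝕜 := ℂ), norm_smul, norm_smul, ← Complex.coe_smul, ← Complex.coe_smul,
    inner_smul_left, inner_smul_right, mul_pow, mul_pow, Real.norm_eq_abs, Real.norm_eq_abs,
    sq_abs, sq_abs, conj_ofReal, ← mul_assoc, ← Complex.ofReal_mul, RCLike.re_to_complex, re_ofReal_mul]
  ring

-- With `u = r^{-1/(d-1)}` every power of `r` occurring is `r^k u^m` for integers `k, m`.
lemma rpow_exponent_identity {d r : ℝ} (hd1 : d - 1 ≠ 0) (hd2 : d - 2 ≠ 0) (hr : 0 < r)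
    (A S n P : ℝ) :
    ((r ^ (-(d / (d - 1)))) ^ 2 * A
        + 2 * r ^ (-(d / (d - 1))) * (-(d / (d - 1)) * r ^ (-(d / (d - 1)) - 1)) * P
        + (-(d / (d - 1)) * r ^ (-(d / (d - 1)) - 1)) ^ 2 * (S * n)) * r ^ 2
      = A / r ^ (2 / (d - 1))
        + (d / (d - 2)) ^ 2 * (((d - 2) / (d - 1) * r ^ ((d - 2) / (d - 1) - 1)) ^ 2 * S) * n
          / r ^ 2
        - 2 * d / (d - 1) * r ^ (-2 / (d - 1) - 1) * P := by
  set u := r ^ (-1 / (d - 1))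
  have hu : 0 < u := Real.rpow_pos_of_pos hr _
  have split (k m : ℤ) (e : ℝ) (he : e = k + -1 / (d - 1) * m) : r ^ e = r ^ k * u ^ m := by
    rw [he, Real.rpow_add hr, Real.rpow_intCast, Real.rpow_mul_intCast hr.le]
  rw [split (-1) 1 (-(d / (d - 1))) (by field_simp; ring),
    split (-2) 1 (-(d / (d - 1)) - 1) (by field_simp; ring),
    split 0 1 ((d - 2) / (d - 1) - 1) (by field_simp; ring),
    split 0 (-2) (2 / (d - 1)) (by field_simp; ring),
    split (-1) 2 (-2 / (d - 1) - 1) (by field_simp; ring)]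
  field_simp
  ring

theorem dirac_term_pointwise_identity_general
    (d : ℕ) (hd : 3 ≤ d) (N : ℕ)
    (γ : Fin d → Matrix (Fin N) (Fin N) ℂ)
    (hherm : ∀ j, (γ j).IsHermitian)
    (hanti : ∀ j k, γ j * γ k + γ k * γ j = if j = k then (2 : ℂ) • 1 else 0)
    (ψ : ESp d → Spinor N) (hψ : ContDiff ℝ 1 ψ) (ε : ℝ) (hε : 0 < ε)
    (φ : ESp d → Spinor N)
    (hφ : φ = fun x => (1 / regMod ψ ε x ^ ((d : ℝ) / ((d : ℝ) - 1))) • ψ x) :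
    ∀ x : ESp d,
      ‖dirac γ φ x‖ ^ 2 * regMod ψ ε x ^ 2
        = ‖dirac γ ψ x‖ ^ 2 / regMod ψ ε x ^ ((2 : ℝ) / ((d : ℝ) - 1))
          + ((d : ℝ) / ((d : ℝ) - 2)) ^ 2
            * gradSq (fun y => regMod ψ ε y ^ (((d : ℝ) - 2) / ((d : ℝ) - 1))) x
            * ‖ψ x‖ ^ 2 / regMod ψ ε x ^ 2
          - (2 * (d : ℝ) / ((d : ℝ) - 1))
            * regMod ψ ε x ^ (-(2 : ℝ) / ((d : ℝ) - 1) - 1)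
            * (inner ℂ (∑ j, pd j (regMod ψ ε) x • mulVecE (γ j) (ψ x))
                     (∑ k, mulVecE (γ k) (pd k ψ x)) : ℂ).re := by
  intro x
  have hd' : (3 : ℝ) ≤ d := by exact_mod_cast hd
  have hψd : Differentiable ℝ ψ := hψ.differentiable one_ne_zero
  set r := regMod ψ ε
  have hr (y : ESp d) : 0 < r y := regMod_pos hε.ne'
  have hrd (y : ESp d) : DifferentiableAt ℝ r y := differentiableAt_regMod (hψd y) hε.ne'
  have hφ' : φ = fun y => r y ^ (-((d : ℝ) / (d - 1))) • ψ y := by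
    rw [hφ]; ext1 y; rw [one_div, Real.rpow_neg (hr y).le]
  have hDφ : dirac γ φ x = (-I) • (r x ^ (-((d : ℝ) / (d - 1))) • ∑ k, mulVecE (γ k) (pd k ψ x)
      + (-((d : ℝ) / (d - 1)) * r x ^ (-((d : ℝ) / (d - 1)) - 1))
        • ∑ j, pd j r x • mulVecE (γ j) (ψ x)) := by
    rw [hφ', dirac_smul γ ((hrd x).rpow_const (Or.inl (hr x).ne')) (hψd x)]
    simp only [pd_rpow_const (hrd x) (hr x).ne', mul_smul, Finset.smul_sum]
  rw [hDφ, dirac_eq_neg_I_smul, norm_smul, norm_smul, norm_neg, norm_I, one_mul, one_mul,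
    norm_smul_add_smul_sq, ← inner_conj_symm, conj_re, norm_sq_sum_smul_mulVecE hherm hanti,
    ← gradSq_eq_sum_sq, gradSq_rpow_const (hrd x) (hr x).ne']
  exact rpow_exponent_identity (by linarith) (by linarith) (hr x) _ _ _ _

/-- The pointwise identity for `|γ·(-i∇)φ|²|ψ|_ε²` with
`φ = ψ/|ψ|_ε^{d/(d-1)}`, for a `C¹` spinor field `ψ`. -/
theorem dirac_term_pointwise_identity
    (d : ℕ) (hd : 3 ≤ d) (N : ℕ) (hN : N = 2 ^ (d / 2))
    (γ : Fin d → Matrix (Fin N) (Fin N) ℂ)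
    (hherm : ∀ j, (γ j).IsHermitian)
    (hanti : ∀ j k, γ j * γ k + γ k * γ j = if j = k then (2 : ℂ) • 1 else 0)
    (ψ : ESp d → Spinor N) (hψ : ContDiff ℝ 1 ψ) (ε : ℝ) (hε : 0 < ε)
    (φ : ESp d → Spinor N)
    (hφ : φ = fun x => (1 / regMod ψ ε x ^ ((d : ℝ) / ((d : ℝ) - 1))) • ψ x) :
    ∀ x : ESp d,
      ‖dirac γ φ x‖ ^ 2 * regMod ψ ε x ^ 2
        = ‖dirac γ ψ x‖ ^ 2 / regMod ψ ε x ^ ((2 : ℝ) / ((d : ℝ) - 1))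
          + ((d : ℝ) / ((d : ℝ) - 2)) ^ 2
            * gradSq (fun y => regMod ψ ε y ^ (((d : ℝ) - 2) / ((d : ℝ) - 1))) x
            * ‖ψ x‖ ^ 2 / regMod ψ ε x ^ 2
          - (2 * (d : ℝ) / ((d : ℝ) - 1))
            * regMod ψ ε x ^ (-(2 : ℝ) / ((d : ℝ) - 1) - 1)
            * (inner ℂ (∑ j, pd j (regMod ψ ε) x • mulVecE (γ j) (ψ x))
                     (∑ k, mulVecE (γ k) (pd k ψ x)) : ℂ).re :=
  dirac_term_pointwise_identity_general d hd N γ hherm hanti ψ hψ ε hε φ hφ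
end
end

section
/- Let d ≥ 3 and let Φ : ℝ^d → ℂ^N be twice continuously differentiable and satisfy the twistor equation [−i∂_j − (1/d) γ_j γ·(-i∇)] Φ = 0 on ℝ^d for every j = 1,…,d. Then the spinor field DΦ := γ·(-i∇)Φ is constant on ℝ^d, i.e. there exists φ_1 ∈ ℂ^N with γ·(-i∇)Φ(x) = φ_1 for all x ∈ ℝ^d; in particular ΔΦ = 0 on ℝ^d. -/
/-!
Write `D = γ·(-i∇)Φ`. The twistor equation says `∂ⱼΦ = (i/d) γⱼ D`, so the symmetry of the
second derivatives of `Φ` gives `γⱼ ∂ₖD = γₖ ∂ⱼD` for all `j, k`. For pairwise distinct `j, k, l`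
the anticommutation relations turn this into `γₗγⱼ ∂ₖD = -γₗγⱼ ∂ₖD`, so `∂ₖD = 0`; any other
index `k'` is then reached through `∂ₖ'D = γₖγₖ ∂ₖ'D = γₖγₖ' ∂ₖD`. Hence `D` is constant, and
`∂ⱼ²Φ = (i/d) γⱼ ∂ⱼD = 0`.
-/

open MeasureTheory Complex Filter ENNReal

noncomputable section

section Clifford

variable {ι A : Type*} [Ring A] {γ : ι → A}

theorem mul_self_eq_one_of_anticomm [DecidableEq ι] [Module ℂ A]
    (hanti : ∀ j k, γ j * γ k + γ k * γ j = if j = k then (2 : ℂ) • (1 : A) else 0) (j : ι) :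
    γ j * γ j = 1 := by
  have h := hanti j j
  rw [if_pos rfl, ← two_smul ℂ (γ j * γ j)] at h
  exact smul_right_injective A two_ne_zero h

theorem mul_eq_neg_mul_of_anticomm [DecidableEq ι] [Module ℂ A]
    (hanti : ∀ j k, γ j * γ k + γ k * γ j = if j = k then (2 : ℂ) • (1 : A) else 0) {j k : ι}
    (hjk : j ≠ k) : γ j * γ k = -(γ k * γ j) := by
  have h := hanti j k
  rw [if_neg hjk] at h
  exact eq_neg_of_add_eq_zero_left h

variable {M : Type*} [AddCommGroup M] [Module A M] [IsAddTorsionFree M]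

theorem eq_zero_of_clifford_smul_symm_of_ne (hsq : ∀ j, γ j * γ j = 1)
    (hanti : ∀ j k, j ≠ k → γ j * γ k = -(γ k * γ j))
    {u : ι → M} (hu : ∀ j k, γ j • u k = γ k • u j) {j k l : ι}
    (hjk : j ≠ k) (hkl : k ≠ l) (hjl : j ≠ l) : u k = 0 := by
  have hw : γ l • γ j • u k = -(γ l • γ j • u k) :=
    calc γ l • γ j • u k = γ l • γ k • u j := by rw [hu]
      _ = -(γ k • γ l • u j) := by rw [← mul_smul, hanti l k hkl.symm, neg_smul, mul_smul]
      _ = -(γ k • γ j • u l) := by rw [hu l j]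
      _ = γ j • γ k • u l := by rw [← mul_smul, hanti k j hjk.symm, neg_smul, neg_neg, mul_smul]
      _ = γ j • γ l • u k := by rw [hu k l]
      _ = -(γ l • γ j • u k) := by rw [← mul_smul, hanti j l hjl, neg_smul, mul_smul]
  calc u k = γ j • (γ l * γ l) • γ j • u k := by rw [hsq, one_smul, ← mul_smul, hsq, one_smul]
    _ = 0 := by rw [mul_smul, self_eq_neg.mp hw, smul_zero, smul_zero]

theorem eq_zero_of_clifford_smul_symm [Fintype ι] (hι : 2 < Fintype.card ι)
    (hsq : ∀ j, γ j * γ j = 1) (hanti : ∀ j k, j ≠ k → γ j * γ k = -(γ k * γ j))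
    {u : ι → M} (hu : ∀ j k, γ j • u k = γ k • u j) (k : ι) : u k = 0 := by
  obtain ⟨a, b, c, hab, hac, hbc⟩ := Fintype.two_lt_card_iff.mp hι
  have ha : u a = 0 := eq_zero_of_clifford_smul_symm_of_ne hsq hanti hu hab.symm hac hbc
  calc u k = γ a • γ a • u k := by rw [← mul_smul, hsq, one_smul]
    _ = 0 := by rw [hu a k, ha, smul_zero, smul_zero]

end Clifford

section PartialDerivatives

variable {d : ℕ} {V W : Type*} [NormedAddCommGroup V] [NormedSpace ℝ V]
  [NormedAddCommGroup W] [NormedSpace ℝ W]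

theorem pd_clm_comp (L : V →L[ℝ] W) {f : ESp d → V} {x : ESp d} (hf : DifferentiableAt ℝ f x)
    (j : Fin d) : pd j (fun y => L (f y)) x = L (pd j f x) := by
  rw [pd, fderiv_fun_comp x L.differentiableAt hf, L.fderiv]
  rfl

theorem pd_pd_eq_fderiv_fderiv {f : ESp d → V} (hf : ContDiff ℝ 2 f) (j k : Fin d) (x : ESp d) :
    pd k (pd j f) x =
      fderiv ℝ (fderiv ℝ f) x (EuclideanSpace.single k 1) (EuclideanSpace.single j 1) :=
  pd_clm_comp (ContinuousLinearMap.apply ℝ V _)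
    ((hf.fderiv_right le_rfl).differentiable one_ne_zero x) k

theorem pd_pd_comm {f : ESp d → V} (hf : ContDiff ℝ 2 f) (j k : Fin d) (x : ESp d) :
    pd k (pd j f) x = pd j (pd k f) x := by
  rw [pd_pd_eq_fderiv_fderiv hf, pd_pd_eq_fderiv_fderiv hf]
  exact (hf.contDiffAt.isSymmSndFDerivAt (by simp)) _ _

theorem differentiable_pd {f : ESp d → V} (hf : ContDiff ℝ 2 f) (j : Fin d) :
    Differentiable ℝ (pd j f) :=
  ((hf.fderiv_right le_rfl).differentiable one_ne_zero).clm_apply (differentiable_const _)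

theorem is_const_of_pd_eq_zero {f : ESp d → V} (hf : Differentiable ℝ f)
    (h : ∀ j x, pd j f x = 0) (x y : ESp d) : f x = f y :=
  is_const_of_fderiv_eq_zero hf (fun z => ContinuousLinearMap.coe_injective <|
    (EuclideanSpace.basisFun (Fin d) ℝ).toBasis.ext fun j => by simpa [pd] using h j z) x y

end PartialDerivatives

section Twistor

variable {d N : ℕ}

theorem mulVecE_eq_toEuclideanCLM (M : Matrix (Fin N) (Fin N) ℂ) (v : Spinor N) :
    mulVecE M v = Matrix.toEuclideanCLM (n := Fin N) (𝕜 := ℂ) M v :=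
  rfl

theorem differentiable_dirac (γ : Fin d → Matrix (Fin N) (Fin N) ℂ) {Φ : ESp d → Spinor N}
    (hΦ : ContDiff ℝ 2 Φ) : Differentiable ℝ (dirac γ Φ) :=
  Differentiable.fun_sum fun j _ =>
    ((Matrix.toEuclideanCLM (n := Fin N) (𝕜 := ℂ) (γ j)).restrictScalars ℝ).differentiable.comp
      ((differentiable_pd hΦ j).const_smul (-I))

def IsTwistorSpinor (γ : Fin d → Matrix (Fin N) (Fin N) ℂ) (Φ : ESp d → Spinor N) : Prop :=
  ∀ j x, (-I) • pd j Φ x - ((d : ℂ)⁻¹) • mulVecE (γ j) (dirac γ Φ x) = 0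

namespace IsTwistorSpinor

variable {γ : Fin d → Matrix (Fin N) (Fin N) ℂ} {Φ : ESp d → Spinor N}

theorem pd_eq (htw : IsTwistorSpinor γ Φ) (j : Fin d) (x : ESp d) :
    pd j Φ x = (I * (d : ℂ)⁻¹) • mulVecE (γ j) (dirac γ Φ x) := by
  calc pd j Φ x = I • (-I) • pd j Φ x := by rw [smul_smul, mul_neg, I_mul_I, neg_neg, one_smul]
    _ = _ := by rw [sub_eq_zero.mp (htw j x), smul_smul]

theorem pd_pd_eq (htw : IsTwistorSpinor γ Φ) (hD : Differentiable ℝ (dirac γ Φ))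
    (j k : Fin d) (x : ESp d) :
    pd k (pd j Φ) x = (I * (d : ℂ)⁻¹) • mulVecE (γ j) (pd k (dirac γ Φ) x) := by
  have h : pd j Φ = fun y =>
      ((I * (d : ℂ)⁻¹) • Matrix.toEuclideanCLM (n := Fin N) (𝕜 := ℂ) (γ j)).restrictScalars ℝ
        (dirac γ Φ y) :=
    funext (htw.pd_eq j)
  rw [h, pd_clm_comp _ (hD x)]
  rfl

theorem mulVecE_pd_dirac_symm (htw : IsTwistorSpinor γ Φ) (hΦ : ContDiff ℝ 2 Φ) (hd : d ≠ 0)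
    (j k : Fin d) (x : ESp d) :
    mulVecE (γ j) (pd k (dirac γ Φ) x) = mulVecE (γ k) (pd j (dirac γ Φ) x) := by
  have hD := differentiable_dirac γ hΦ
  have hc : I * (d : ℂ)⁻¹ ≠ 0 := mul_ne_zero I_ne_zero (inv_ne_zero (Nat.cast_ne_zero.mpr hd))
  refine smul_right_injective _ hc ?_
  simp only [← htw.pd_pd_eq hD]
  exact pd_pd_comm hΦ j k x

theorem pd_dirac_eq_zero (htw : IsTwistorSpinor γ Φ) (hΦ : ContDiff ℝ 2 Φ) (hd : 3 ≤ d)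
    (hanti : ∀ j k, γ j * γ k + γ k * γ j = if j = k then (2 : ℂ) • 1 else 0)
    (k : Fin d) (x : ESp d) : pd k (dirac γ Φ) x = 0 := by
  let Γ j := Matrix.toEuclideanCLM (n := Fin N) (𝕜 := ℂ) (γ j)
  have : IsAddTorsionFree (Spinor N) := .of_module_rat _
  refine eq_zero_of_clifford_smul_symm (γ := Γ) (u := fun k => pd k (dirac γ Φ) x)
    (by simp only [Fintype.card_fin]; omega) (fun j => ?_) (fun j k hjk => ?_)
    (htw.mulVecE_pd_dirac_symm hΦ (by omega) · · x) k
  · rw [← map_mul, mul_self_eq_one_of_anticomm hanti, map_one]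
  · rw [← map_mul, mul_eq_neg_mul_of_anticomm hanti hjk, map_neg, map_mul]

end IsTwistorSpinor

end Twistor

theorem twistor_spinor_dirac_constant_general
    (d : ℕ) (hd : 3 ≤ d) (N : ℕ)
    (γ : Fin d → Matrix (Fin N) (Fin N) ℂ)
    (hanti : ∀ j k, γ j * γ k + γ k * γ j = if j = k then (2 : ℂ) • 1 else 0)
    (Φ : ESp d → Spinor N) (hΦ : ContDiff ℝ 2 Φ)
    (htw : ∀ (j : Fin d) (x : ESp d),
      (-Complex.I) • pd j Φ x - (((d : ℂ))⁻¹) • mulVecE (γ j) (dirac γ Φ x) = 0) :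
    (∃ φ₁ : Spinor N, ∀ x : ESp d, dirac γ Φ x = φ₁)
      ∧ ∀ x : ESp d, ∑ j, pd j (fun y => pd j Φ y) x = 0 := by
  have htw : IsTwistorSpinor γ Φ := htw
  have hD := differentiable_dirac γ hΦ
  have hD0 := htw.pd_dirac_eq_zero hΦ hd hanti
  refine ⟨⟨dirac γ Φ 0, fun x => is_const_of_pd_eq_zero hD hD0 x 0⟩, fun x => ?_⟩
  refine Finset.sum_eq_zero fun j _ => ?_
  rw [htw.pd_pd_eq hD, hD0, mulVecE_eq_toEuclideanCLM, map_zero, smul_zero]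

/-- For a `C²` twistor spinor `Φ`, the spinor field `γ·(-i∇)Φ` is
constant, and in particular `ΔΦ = 0`. -/
theorem twistor_spinor_dirac_constant
    (d : ℕ) (hd : 3 ≤ d) (N : ℕ) (hN : N = 2 ^ (d / 2))
    (γ : Fin d → Matrix (Fin N) (Fin N) ℂ)
    (hherm : ∀ j, (γ j).IsHermitian)
    (hanti : ∀ j k, γ j * γ k + γ k * γ j = if j = k then (2 : ℂ) • 1 else 0)
    (Φ : ESp d → Spinor N) (hΦ : ContDiff ℝ 2 Φ)
    (htw : ∀ (j : Fin d) (x : ESp d),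
      (-Complex.I) • pd j Φ x - (((d : ℂ))⁻¹) • mulVecE (γ j) (dirac γ Φ x) = 0) :
    (∃ φ₁ : Spinor N, ∀ x : ESp d, dirac γ Φ x = φ₁)
      ∧ ∀ x : ESp d, ∑ j, pd j (fun y => pd j Φ y) x = 0 :=
  twistor_spinor_dirac_constant_general d hd N γ hanti Φ hΦ htw
end
end
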